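/- If ν* : S → ℝ is a global minimizer of L, then Z(ν*) = exp(1) (Euler's number) and consequently L(ν*) = 𝓛̃(ν*). -/

import Mathlib

/-!
Shifting `ν` by a constant `C` changes every advantage by `-(1 - γ) C`, so along constant shifts
`L (ν* + C) - L ν* = (1 - γ) C + α E (exp (-(1 - γ) C / α) - 1)` with `E = Z(ν*) / e`.
With `u = (1 - γ) C / α`, minimality at `C = 0` says that `u ↦ u + E e^{-u}` is minimal at `0`;
testing `u = log E` gives `E - 1 ≤ log E`, which forces `E = 1`.
-/

open Real Finset

lemma eq_one_of_forall_le_add_mul_exp_neg {E : ℝ} (hE : 0 < E)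
    (h : ∀ u, E ≤ u + E * exp (-u)) : E = 1 := by
  by_contra hne
  have hlog := h (log E)
  rw [exp_neg, exp_log hE, mul_inv_cancel₀ hE.ne'] at hlog
  linarith [log_lt_sub_one_of_pos hE hne]

lemma sum_mul_exp_add {X : Type*} (s : Finset X) (c a : X → ℝ) (d : ℝ) :
    ∑ x ∈ s, c x * exp (a x + d) = exp d * ∑ x ∈ s, c x * exp (a x) := by
  rw [mul_sum]
  refine sum_congr rfl fun x _ => ?_
  rw [exp_add]
  ring

section DualObjective

variable {S X : Type*}

def advantage (γ : ℝ) (st st' : X → S) (e₀ : X → ℝ) (ν : S → ℝ) (x : X) : ℝ :=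
  e₀ x + γ * ν (st' x) - ν (st x)

lemma advantage_add_const (γ : ℝ) (st st' : X → S) (e₀ : X → ℝ) (ν : S → ℝ) (C : ℝ) (x : X) :
    advantage γ st st' e₀ (fun s => ν s + C) x = advantage γ st st' e₀ ν x - (1 - γ) * C := by
  unfold advantage
  ring

variable [Fintype S] [Fintype X]

noncomputable def dualObjective (α γ : ℝ) (c : X → ℝ) (st st' : X → S) (e₀ : X → ℝ) (p₀ : S → ℝ)
    (ν : S → ℝ) : ℝ :=
  (1 - γ) * ∑ s, p₀ s * ν s + α * ∑ x, c x * exp (advantage γ st st' e₀ ν x / α - 1)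

lemma dualObjective_add_const {α γ : ℝ} {c : X → ℝ} {st st' : X → S} {e₀ : X → ℝ}
    {p₀ : S → ℝ} (hp₀ : ∑ s, p₀ s = 1) (ν : S → ℝ) (C : ℝ) :
    dualObjective α γ c st st' e₀ p₀ (fun s => ν s + C) =
      dualObjective α γ c st st' e₀ p₀ ν + (1 - γ) * C +
        α * (exp (-((1 - γ) * C / α)) - 1) *
          ∑ x, c x * exp (advantage γ st st' e₀ ν x / α - 1) := by
  have hp₀ν : ∑ s, p₀ s * (ν s + C) = ∑ s, p₀ s * ν s + C := by
    simp only [mul_add, sum_add_distrib, ← sum_mul, hp₀, one_mul]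
  have hexp : ∑ x, c x * exp (advantage γ st st' e₀ (fun s => ν s + C) x / α - 1) =
      exp (-((1 - γ) * C / α)) * ∑ x, c x * exp (advantage γ st st' e₀ ν x / α - 1) := by
    rw [← sum_mul_exp_add]
    refine sum_congr rfl fun x _ => ?_
    rw [advantage_add_const]
    ring_nf
  unfold dualObjective
  rw [hp₀ν, hexp]
  ring

end DualObjective

theorem stmt_14_general {S X : Type*} [Fintype S] [Fintype X]
    (α γ : ℝ) (hα : 0 < α) (hγ1 : γ < 1)
    (c : X → ℝ) (hc : ∀ x, 0 ≤ c x) (hc0 : ∃ x₀, 0 < c x₀)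
    (st st' : X → S) (e₀ : X → ℝ)
    (p₀ : S → ℝ) (hp₀sum : ∑ s, p₀ s = 1)
    (ehat : (S → ℝ) → X → ℝ)
    (hehat : ∀ (ν : S → ℝ) (x : X), ehat ν x = e₀ x + γ * ν (st' x) - ν (st x))
    (Z : (S → ℝ) → ℝ)
    (hZ : ∀ ν : S → ℝ, Z ν = ∑ x, c x * Real.exp (ehat ν x / α))
    (L : (S → ℝ) → ℝ)
    (hL : ∀ ν : S → ℝ,
      L ν = (1 - γ) * ∑ s, p₀ s * ν s + α * ∑ x, c x * Real.exp (ehat ν x / α - 1))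
    (Ltil : (S → ℝ) → ℝ)
    (hLtil : ∀ ν : S → ℝ,
      Ltil ν = (1 - γ) * ∑ s, p₀ s * ν s + α * Real.log (Z ν))
    (νstar : S → ℝ) (hνstar : ∀ ν : S → ℝ, L νstar ≤ L ν) :
    Z νstar = Real.exp 1 ∧ L νstar = Ltil νstar := by
  obtain rfl : ehat = advantage γ st st' e₀ := funext fun ν => funext (hehat ν)
  obtain rfl : L = dualObjective α γ c st st' e₀ p₀ := funext hL
  set E := ∑ x, c x * exp (advantage γ st st' e₀ νstar x / α - 1) with hE
  have hZE : Z νstar = exp 1 * E := by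
    simp only [hZ, hE, ← sum_mul_exp_add, sub_add_cancel]
  have hEpos : 0 < E := by
    obtain ⟨x₀, hx₀⟩ := hc0
    exact sum_pos' (fun x _ => mul_nonneg (hc x) (exp_pos _).le)
      ⟨x₀, mem_univ _, mul_pos hx₀ (exp_pos _)⟩
  have hE1 : E = 1 := by
    refine eq_one_of_forall_le_add_mul_exp_neg hEpos fun u => ?_
    have hmin := hνstar fun s => νstar s + α * u / (1 - γ)
    have hu : (1 - γ) * (α * u / (1 - γ)) = α * u := mul_div_cancel₀ _ (by linarith)
    rw [dualObjective_add_const hp₀sum, ← hE, hu, mul_div_cancel_left₀ u hα.ne'] at hmin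
    nlinarith
  refine ⟨by rw [hZE, hE1, mul_one], ?_⟩
  rw [hLtil, hZE, hE1, mul_one, log_exp, dualObjective, ← hE, hE1, mul_one]

/-- If `ν*` is a global minimizer of `L`, then `Z(ν*) = exp 1` and consequently `L(ν*) = 𝓛̃(ν*)`. -/
theorem stmt_14 {S X : Type*} [Fintype S] [Fintype X] [Nonempty S] [Nonempty X]
    (α γ : ℝ) (hα : 0 < α) (hγ0 : 0 < γ) (hγ1 : γ < 1)
    (c : X → ℝ) (hc : ∀ x, 0 ≤ c x) (hc0 : ∃ x₀, 0 < c x₀)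
    (st st' : X → S) (e₀ : X → ℝ)
    (p₀ : S → ℝ) (hp₀ : ∀ s, 0 ≤ p₀ s) (hp₀sum : ∑ s, p₀ s = 1)
    (ehat : (S → ℝ) → X → ℝ)
    (hehat : ∀ (ν : S → ℝ) (x : X), ehat ν x = e₀ x + γ * ν (st' x) - ν (st x))
    (Z : (S → ℝ) → ℝ)
    (hZ : ∀ ν : S → ℝ, Z ν = ∑ x, c x * Real.exp (ehat ν x / α))
    (L : (S → ℝ) → ℝ)
    (hL : ∀ ν : S → ℝ,
      L ν = (1 - γ) * ∑ s, p₀ s * ν s + α * ∑ x, c x * Real.exp (ehat ν x / α - 1))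
    (Ltil : (S → ℝ) → ℝ)
    (hLtil : ∀ ν : S → ℝ,
      Ltil ν = (1 - γ) * ∑ s, p₀ s * ν s + α * Real.log (Z ν))
    (νstar : S → ℝ) (hνstar : ∀ ν : S → ℝ, L νstar ≤ L ν) :
    Z νstar = Real.exp 1 ∧ L νstar = Ltil νstar :=
  stmt_14_general α γ hα hγ1 c hc hc0 st st' e₀ p₀ hp₀sum ehat hehat Z hZ L hL Ltil hLtil νstar
    hνstar
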